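/- arXiv:2103.14144 — 6 statements merged into one kernel-verified Lean document; each statement's English description precedes it below -/
import Mathlib

section
/- Let X ⊆ ℝ, let g : X → ℝ be nonincreasing and L-Lipschitz with L > 0, let 0 ≤ α ≤ 1/(L + 1), and define f(x) = α·g(x) + (1 − α)·x. Then f is (1 − α)-Lipschitz on X. Moreover, if in addition α > 0 and f maps X into X, then f : X → X is a contraction, i.e. Lipschitz on X with constant 1 − α < 1. -/
/-! For `x ≤ y`, antitonicity and the Lipschitz bound give `0 ≤ g x - g y ≤ L (y - x)`, so
`f y - f x = (1 - α)(y - x) - α (g x - g y)` lies between `(1 - α (L + 1))(y - x) ≥ 0` and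
`(1 - α)(y - x)`. -/

def monotoneMixture (α : ℝ) (g : ℝ → ℝ) (x : ℝ) : ℝ := α * g x + (1 - α) * x

lemma monotoneMixture_sub_monotoneMixture (α : ℝ) (g : ℝ → ℝ) (x y : ℝ) :
    monotoneMixture α g y - monotoneMixture α g x = (1 - α) * (y - x) - α * (g x - g y) := by
  unfold monotoneMixture
  ring

section

variable {X : Set ℝ} {g : ℝ → ℝ} {L α : ℝ}

lemma abs_monotoneMixture_sub_le_of_le (hmono : AntitoneOn g X)
    (hlip : ∀ x ∈ X, ∀ y ∈ X, |g x - g y| ≤ L * |x - y|) (hα0 : 0 ≤ α)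
    (hαL : α * (L + 1) ≤ 1) {x y : ℝ} (hx : x ∈ X) (hy : y ∈ X) (hxy : x ≤ y) :
    |monotoneMixture α g x - monotoneMixture α g y| ≤ (1 - α) * |x - y| := by
  have hyx : 0 ≤ y - x := sub_nonneg.2 hxy
  have hgap : 0 ≤ g x - g y := sub_nonneg.2 (hmono hx hy hxy)
  have hgL : g x - g y ≤ L * (y - x) := by
    simpa only [abs_of_nonneg hgap, abs_sub_comm x y, abs_of_nonneg hyx] using hlip x hx y hy
  rw [abs_sub_comm, abs_sub_comm x y, abs_of_nonneg hyx, abs_le,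
    monotoneMixture_sub_monotoneMixture]
  constructor <;> nlinarith [mul_le_mul_of_nonneg_left hgL hα0, mul_nonneg hα0 hgap,
    mul_le_mul_of_nonneg_right hαL hyx]

lemma abs_monotoneMixture_sub_le (hmono : AntitoneOn g X)
    (hlip : ∀ x ∈ X, ∀ y ∈ X, |g x - g y| ≤ L * |x - y|) (hα0 : 0 ≤ α)
    (hαL : α * (L + 1) ≤ 1) {x y : ℝ} (hx : x ∈ X) (hy : y ∈ X) :
    |monotoneMixture α g x - monotoneMixture α g y| ≤ (1 - α) * |x - y| := by
  wlog hxy : x ≤ y generalizing x y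
  · rw [abs_sub_comm, abs_sub_comm x y]
    exact this hy hx (le_of_not_ge hxy)
  exact abs_monotoneMixture_sub_le_of_le hmono hlip hα0 hαL hx hy hxy

end

/-- Lemma (contractive update rule): if `g` is nonincreasing and `L`-Lipschitz on `X`
with `L > 0`, and `0 ≤ α ≤ 1/(L+1)`, then the monotone mixture
`f(x) = α·g(x) + (1-α)·x` is `(1-α)`-Lipschitz on `X`; moreover, if `α > 0` and `f`
maps `X` into itself, then `f : X → X` is a contraction with constant `1 - α < 1`. -/
theorem monotone_mixture_contraction
    (X : Set ℝ) (g : ℝ → ℝ) (L : ℝ) (hL : 0 < L)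
    (hmono : AntitoneOn g X)
    (hlip : ∀ x ∈ X, ∀ y ∈ X, |g x - g y| ≤ L * |x - y|)
    (α : ℝ) (hα0 : 0 ≤ α) (hα1 : α ≤ 1 / (L + 1))
    (f : ℝ → ℝ) (hf : ∀ x, f x = α * g x + (1 - α) * x) :
    (∀ x ∈ X, ∀ y ∈ X, |f x - f y| ≤ (1 - α) * |x - y|) ∧
    (0 < α → Set.MapsTo f X X →
      (1 - α < 1 ∧ ∀ x ∈ X, ∀ y ∈ X, |f x - f y| ≤ (1 - α) * |x - y|)) := by
  have hαL : α * (L + 1) ≤ 1 := (le_div_iff₀ (by linarith)).1 hα1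
  obtain rfl : f = monotoneMixture α g := funext hf
  have hlipf : ∀ x ∈ X, ∀ y ∈ X, |monotoneMixture α g x - monotoneMixture α g y| ≤
      (1 - α) * |x - y| :=
    fun x hx y hy => abs_monotoneMixture_sub_le hmono hlip hα0 hαL hx hy
  exact ⟨hlipf, fun hαpos _ => ⟨by linarith, hlipf⟩⟩
end

section
/- Let ā > 0 and X = [0, ā], and let f : X → X satisfy: (i) f is strictly concave on X and Lipschitz continuous on X; (ii) f(x) ≥ 0 for all x ∈ X; (iii) there exists x̄ ∈ X such that f is strictly increasing on [0, x̄), f is strictly decreasing on [x̄, ā], and the restriction of f to [x̄, ā] is L-Lipschitz for some L < 1; (iv) there exists b ∈ X with b > 0 and f(b) < b. Then for every x₀ ∈ X, the sequence of iterates x₀, f(x₀), f(f(x₀)), … converges to a fixed point of f. -/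
open Set Filter Topology

/-!
Let `z` be the largest point of `[0, abar]` with `z ≤ f z`. It is a fixed point, `f x < x` to
its right and, by concavity and `0 ≤ f 0`, `x ≤ f x` to its left. By concavity the secant slope
of `f` from `z` is antitone, hence bounded below by its value at `abar`, which is at least `-L`
because `f` increases up to `xbar` and is `L`-Lipschitz on `[xbar, abar]`. So every iterate moves
towards `z` and overshoots it by a factor at most `L`: `x (k + 1) - z` lies between `x k - z` and
`-L (x k - z)`. Such a sequence converges, and its limit is a fixed point by continuity.
-/

theorem mul_abs_sub_le_of_mem_uIcc_neg_mul {L y y' : ℝ} (hL : 0 ≤ L)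
    (h : y' ∈ uIcc y (-(L * y))) : (1 - L) * |y' - y| ≤ (1 + L) * (|y| - |y'|) := by
  rw [mem_uIcc] at h
  rcases abs_cases (y' - y) with ⟨h1, _⟩ | ⟨h1, _⟩ <;>
  rcases abs_cases y with ⟨h2, _⟩ | ⟨h2, _⟩ <;>
  rcases abs_cases y' with ⟨h3, _⟩ | ⟨h3, _⟩ <;>
  rw [h1, h2, h3] <;> rcases h with ⟨_, _⟩ | ⟨_, _⟩ <;> nlinarith

theorem exists_tendsto_of_forall_mem_uIcc_neg_mul {L : ℝ} (hL0 : 0 ≤ L) (hL1 : L < 1)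
    {y : ℕ → ℝ} (hy : ∀ k, y (k + 1) ∈ uIcc (y k) (-(L * y k))) :
    ∃ w, Tendsto y atTop (𝓝 w) := by
  have hstep k := mul_abs_sub_le_of_mem_uIcc_neg_mul hL0 (hy k)
  have habs : Antitone fun k => |y k| := antitone_nat_of_succ_le fun k => by
    nlinarith [abs_nonneg (y (k + 1) - y k), hstep k]
  -- `u` is antitone and nonnegative, and `y` is recovered from the limits of `u` and `|y|`.
  set u := fun k => (1 - L) * y k + (1 + L) * |y k|
  have hu : Antitone u := antitone_nat_of_succ_le fun k => by
    nlinarith [mul_le_mul_of_nonneg_left (le_abs_self (y (k + 1) - y k)) (sub_nonneg.2 hL1.le),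
      hstep k]
  have hu0 k : 0 ≤ u k := by nlinarith [neg_abs_le (y k), abs_nonneg (y k)]
  have hut := tendsto_atTop_ciInf hu ⟨0, by rintro _ ⟨k, rfl⟩; exact hu0 k⟩
  have habst := tendsto_atTop_ciInf habs ⟨0, by rintro _ ⟨k, rfl⟩; exact abs_nonneg (y k)⟩
  refine ⟨_, ((hut.sub (habst.const_mul (1 + L))).div_const (1 - L)).congr fun k => ?_⟩
  field_simp [(sub_pos.2 hL1).ne']
  simp only [u]; ring

theorem MonotoneOn.le_of_continuousWithinAt_Ico {α β : Type*} [LinearOrder α]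
    [TopologicalSpace α] [OrderTopology α] [DenselyOrdered α] [Preorder β] [TopologicalSpace β]
    [OrderClosedTopology β] {f : α → β} {p q x : α} (hf : MonotoneOn f (Ico p q))
    (hcont : ContinuousWithinAt f (Ico p q) q) (hx : x ∈ Ico p q) : f x ≤ f q := by
  refine ContinuousWithinAt.closure_le (s := Ico x q) (f := fun _ => f x) ?_
    continuousWithinAt_const (hcont.mono (Ico_subset_Ico_left hx.1))
    fun y hy => hf hx ⟨hx.1.trans hy.1, hy.2⟩ hy.1
  rw [closure_Ico hx.2.ne]
  exact right_mem_Icc.2 hx.2.le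

theorem exists_apply_eq_forall_Ioc_apply_lt {f : ℝ → ℝ} {p q : ℝ} (hpq : p ≤ q)
    (hf : ContinuousOn f (Icc p q)) (hp : p ≤ f p) (hq : f q ≤ q) :
    ∃ z ∈ Icc p q, f z = z ∧ ∀ x ∈ Ioc z q, f x < x := by
  have hS : IsClosed {x ∈ Icc p q | x ≤ f x} := isClosed_Icc.isClosed_le continuousOn_id hf
  obtain ⟨z, ⟨hz, hzf⟩, hzmax⟩ :=
    (isCompact_Icc.of_isClosed_subset hS (sep_subset _ _)).exists_isGreatest
      ⟨p, left_mem_Icc.2 hpq, hp⟩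
  have habove : ∀ x ∈ Ioc z q, f x < x := fun x hx => lt_of_not_ge fun h =>
    hx.1.not_ge (hzmax ⟨⟨hz.1.trans hx.1.le, hx.2⟩, h⟩)
  refine ⟨z, hz, ?_, habove⟩
  obtain ⟨c, hc, hfc⟩ := intermediate_value_Icc' hz.2
    ((hf.mono (Icc_subset_Icc_left hz.1)).sub continuousOn_id)
    (show (0 : ℝ) ∈ Icc (f q - q) (f z - z) from ⟨by linarith, by linarith⟩)
  replace hfc : f c = c := sub_eq_zero.1 hfc
  rcases hc.1.eq_or_lt with rfl | hzc
  · exact hfc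
  · exact absurd hfc (habove c ⟨hzc, hc.2⟩).ne

theorem isFixedPt_of_tendsto_iterate_of_continuousOn {α : Type*} [TopologicalSpace α] [T2Space α]
    {f : α → α} {s : Set α} {x y : α} (hs : IsClosed s) (hmaps : MapsTo f s s)
    (hf : ContinuousOn f s) (hx : x ∈ s) (hy : Tendsto (fun n => f^[n] x) atTop (𝓝 y)) :
    y ∈ s ∧ Function.IsFixedPt f y := by
  have hmem : ∀ n, f^[n] x ∈ s := fun n => hmaps.iterate n hx
  have hys : y ∈ s := hs.mem_of_tendsto hy (Eventually.of_forall hmem)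
  refine ⟨hys, tendsto_nhds_unique ?_ ((tendsto_add_atTop_iff_nat 1).2 hy)⟩
  simp only [Function.iterate_succ']
  exact ((hf y hys).tendsto.comp (tendsto_nhdsWithin_iff.2 ⟨hy, Eventually.of_forall hmem⟩))

theorem apply_le_apply_right_add_mul {f : ℝ → ℝ} {p xbar a L z : ℝ} (hxbar : xbar ≤ a)
    (hinc : MonotoneOn f (Ico p xbar)) (hcont : ContinuousWithinAt f (Ico p xbar) xbar)
    (hL0 : 0 ≤ L) (hlip : ∀ x ∈ Icc xbar a, ∀ y ∈ Icc xbar a, |f x - f y| ≤ L * |x - y|)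
    (hz : z ∈ Icc p a) : f z ≤ f a + L * (a - z) := by
  rcases lt_or_ge z xbar with hzx | hxz
  · have hmax := hinc.le_of_continuousWithinAt_Ico hcont ⟨hz.1, hzx⟩
    have h := hlip xbar ⟨le_rfl, hxbar⟩ a ⟨hxbar, le_rfl⟩
    rw [abs_sub_comm xbar a, abs_of_nonneg (sub_nonneg.2 hxbar)] at h
    nlinarith [le_abs_self (f xbar - f a)]
  · have h := hlip z ⟨hxz, hz.2⟩ a ⟨hxbar, le_rfl⟩
    rw [abs_sub_comm z a, abs_of_nonneg (sub_nonneg.2 hz.2)] at h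
    linarith [le_abs_self (f z - f a)]

theorem ConcaveOn.neg_le_slope_of_apply_eq_self {f : ℝ → ℝ} {p q z L x : ℝ}
    (hconc : ConcaveOn ℝ (Icc p q) f) (hmaps : MapsTo f (Icc p q) (Icc p q)) (hL0 : 0 ≤ L)
    (hz : z ∈ Icc p q) (hfz : f z = z) (hright : f z ≤ f q + L * (q - z)) (hx : x ∈ Icc p q)
    (hxz : x ≠ z) : -L ≤ slope f z x := by
  rcases hz.2.eq_or_lt with rfl | hzq
  · rw [slope_def_field, hfz]
    exact (neg_nonpos.2 hL0).trans
      (div_nonneg_of_nonpos (sub_nonpos.2 (hmaps hx).2) (sub_nonpos.2 hx.2))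
  · calc -L ≤ slope f z q := by
          rw [slope_def_field, le_div_iff₀ (sub_pos.2 hzq)]
          linarith
      _ ≤ slope f z x :=
        hconc.slope_anti hz ⟨hx, hxz⟩ ⟨right_mem_Icc.2 (hz.1.trans hzq.le), hzq.ne'⟩ hx.2

theorem ConcaveOn.sub_mem_uIcc_of_apply_eq_self {f : ℝ → ℝ} {p q z L x : ℝ}
    (hconc : ConcaveOn ℝ (Icc p q) f) (hmaps : MapsTo f (Icc p q) (Icc p q)) (hL0 : 0 ≤ L)
    (hz : z ∈ Icc p q) (hfz : f z = z) (habove : ∀ x ∈ Ioc z q, f x < x)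
    (hright : f z ≤ f q + L * (q - z)) (hx : x ∈ Icc p q) :
    f x - z ∈ uIcc (x - z) (-(L * (x - z))) := by
  rcases lt_trichotomy x z with hxz | rfl | hzx
  · have hslope := hconc.neg_le_slope_of_apply_eq_self hmaps hL0 hz hfz hright hx hxz.ne
    rw [slope_def_field, hfz, le_div_iff_of_neg (sub_neg.2 hxz)] at hslope
    -- `f - id` is concave and nonnegative at both ends of `[p, z]`.
    have hbelow : 0 ≤ f x - x := by
      have hp := left_mem_Icc.2 (hx.1.trans hx.2)
      have := (hconc.sub (convexOn_id (convex_Icc p q))).ge_on_segment hp hz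
        (by rw [segment_eq_Icc (hx.1.trans hxz.le)]; exact ⟨hx.1, hxz.le⟩)
      simp only [Pi.sub_apply, id, hfz, sub_self, min_le_iff] at this
      rcases this with h | h <;> linarith [(hmaps hp).1]
    exact mem_uIcc.2 (Or.inl ⟨by linarith, by linarith⟩)
  · simp [hfz]
  · have hslope := hconc.neg_le_slope_of_apply_eq_self hmaps hL0 hz hfz hright hx hzx.ne'
    rw [slope_def_field, hfz, le_div_iff₀ (sub_pos.2 hzx)] at hslope
    exact mem_uIcc.2 (Or.inr ⟨by linarith, by linarith [habove x ⟨hzx, hx.2⟩]⟩)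

theorem concave_contraction_iteration_converges_general
    (abar : ℝ) (habar : 0 < abar) (f : ℝ → ℝ)
    (hmaps : Set.MapsTo f (Set.Icc 0 abar) (Set.Icc 0 abar))
    -- (i) strictly concave and Lipschitz on X = [0, abar]
    (hconc : StrictConcaveOn ℝ (Set.Icc 0 abar) f)
    (K : ℝ)
    (hlipX : ∀ x ∈ Set.Icc 0 abar, ∀ y ∈ Set.Icc 0 abar, |f x - f y| ≤ K * |x - y|)
    -- (iii) increasing on [0, xbar), decreasing and L-Lipschitz (L < 1) on [xbar, abar]
    (xbar : ℝ) (hxbar : xbar ∈ Set.Icc 0 abar)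
    (hinc : StrictMonoOn f (Set.Ico 0 xbar))
    (L : ℝ) (hL0 : 0 ≤ L) (hL1 : L < 1)
    (hlipD : ∀ x ∈ Set.Icc xbar abar, ∀ y ∈ Set.Icc xbar abar, |f x - f y| ≤ L * |x - y|)
    -- conclusion
    (x₀ : ℝ) (hx₀ : x₀ ∈ Set.Icc 0 abar) :
    ∃ z ∈ Set.Icc 0 abar, f z = z ∧
      Tendsto (fun k => f^[k] x₀) atTop (nhds z) := by
  have hcont : ContinuousOn f (Icc 0 abar) :=
    (LipschitzOnWith.of_dist_le' (by simpa only [Real.dist_eq] using hlipX)).continuousOn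
  obtain ⟨z, hz, hfz, habove⟩ := exists_apply_eq_forall_Ioc_apply_lt habar.le hcont
    (hmaps (left_mem_Icc.2 habar.le)).1 (hmaps (right_mem_Icc.2 habar.le)).2
  have hright : f z ≤ f abar + L * (abar - z) :=
    apply_le_apply_right_add_mul hxbar.2 hinc.monotoneOn
      ((hcont xbar hxbar).mono (Ico_subset_Icc_self.trans (Icc_subset_Icc_right hxbar.2)))
      hL0 hlipD hz
  obtain ⟨w, hw⟩ := exists_tendsto_of_forall_mem_uIcc_neg_mul hL0 hL1
    (y := fun k => f^[k] x₀ - z) fun k => by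
      simpa only [Function.iterate_succ_apply'] using
        hconc.concaveOn.sub_mem_uIcc_of_apply_eq_self hmaps hL0 hz hfz habove hright
          (hmaps.iterate k hx₀)
  have hlim : Tendsto (fun k => f^[k] x₀) atTop (𝓝 (w + z)) := by
    simpa using hw.add_const z
  obtain ⟨hmem, hfix⟩ :=
    isFixedPt_of_tendsto_iterate_of_continuousOn isClosed_Icc hmaps hcont hx₀ hlim
  exact ⟨w + z, hmem, hfix, hlim⟩

/-- Lemma (concave contraction): under Assumption 2, the fixed-point iteration of
`f : [0, abar] → [0, abar]` starting from any point of `[0, abar]` converges to a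
fixed point of `f`. -/
theorem concave_contraction_iteration_converges
    (abar : ℝ) (habar : 0 < abar) (f : ℝ → ℝ)
    (hmaps : Set.MapsTo f (Set.Icc 0 abar) (Set.Icc 0 abar))
    -- (i) strictly concave and Lipschitz on X = [0, abar]
    (hconc : StrictConcaveOn ℝ (Set.Icc 0 abar) f)
    (K : ℝ) (hK : 0 ≤ K)
    (hlipX : ∀ x ∈ Set.Icc 0 abar, ∀ y ∈ Set.Icc 0 abar, |f x - f y| ≤ K * |x - y|)
    -- (ii) nonnegativity on X
    (hnn : ∀ x ∈ Set.Icc 0 abar, 0 ≤ f x)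
    -- (iii) increasing on [0, xbar), decreasing and L-Lipschitz (L < 1) on [xbar, abar]
    (xbar : ℝ) (hxbar : xbar ∈ Set.Icc 0 abar)
    (hinc : StrictMonoOn f (Set.Ico 0 xbar))
    (hdec : StrictAntiOn f (Set.Icc xbar abar))
    (L : ℝ) (hL0 : 0 ≤ L) (hL1 : L < 1)
    (hlipD : ∀ x ∈ Set.Icc xbar abar, ∀ y ∈ Set.Icc xbar abar, |f x - f y| ≤ L * |x - y|)
    -- (iv) a positive b with f(b) < b
    (b : ℝ) (hb : b ∈ Set.Icc 0 abar) (hb0 : 0 < b) (hfb : f b < b)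
    -- conclusion
    (x₀ : ℝ) (hx₀ : x₀ ∈ Set.Icc 0 abar) :
    ∃ z ∈ Set.Icc 0 abar, f z = z ∧
      Tendsto (fun k => f^[k] x₀) atTop (nhds z) :=
  concave_contraction_iteration_converges_general abar habar f hmaps hconc K hlipX xbar hxbar hinc L
    hL0 hL1 hlipD x₀ hx₀
end

section
/- Assume the bidder values are μ-almost surely nonnegative and integrable, that OPT > 0, and that the revenue curve rev is L-Lipschitz on [0, ∞). Let 0 < α ≤ 1/(L/m + 1) and define the expected welfare-based price update E(q) = α·W(q)/m + (1 − α)·q. Then there is a unique equilibrium price q* > 0 such that for every starting price q₀ > 0 the iterates q₀, E(q₀), E(E(q₀)), … converge to q*; moreover q* satisfies W(q*) = m·q* and W(q*) ≥ OPT/2. -/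
open MeasureTheory Filter

/-- Number of bidders with value at least `q`. -/
noncomputable def demandCount (n : ℕ) (q : ℝ) (v : Fin n → ℝ) : ℕ :=
  (Finset.univ.filter fun i => q ≤ v i).card

/-- Demand curve with limited supply `m`: expected value of `min(m, N(q,v))`. -/
noncomputable def mde (n m : ℕ) (μ : Measure ℝ) (q : ℝ) : ℝ :=
  ∫ v, ((min m (demandCount n q v) : ℕ) : ℝ) ∂(Measure.pi fun _ : Fin n => μ)

/-- Revenue curve: `rev(q) = q · mde(q)`. -/
noncomputable def rev (n m : ℕ) (μ : Measure ℝ) (q : ℝ) : ℝ :=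
  q * mde n m μ q

/-- Welfare of the maximum-value allocation at price `q` for value profile `v`:
the largest sum `Σ_{i∈S} vᵢ·1{vᵢ ≥ q}` over subsets `S` of size at most `m`. -/
noncomputable def maxWelfare (n m : ℕ) (q : ℝ) (v : Fin n → ℝ) : ℝ :=
  ((Finset.univ : Finset (Fin n)).powerset.filter fun S => S.card ≤ m).sup'
    ⟨∅, by simp⟩ fun S => ∑ i ∈ S, if q ≤ v i then v i else 0

/-- Welfare curve: expected welfare of the maximum-value allocation at price `q`. -/
noncomputable def W (n m : ℕ) (μ : Measure ℝ) (q : ℝ) : ℝ :=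
  ∫ v, maxWelfare n m q v ∂(Measure.pi fun _ : Fin n => μ)

/-!
For `q ≥ 0` the optimal welfare of a profile splits as `q · min(m, N(q))` plus the best total
surplus `∑ (vᵢ - q)⁺` of at most `m` bidders. The surplus term loses at most `m (b - a)` when the
price rises from `a` to `b`, so in expectation `W(a) - W(b) ≤ rev(a) - rev(b) + m (b - a)
≤ (L + m)(b - a)`. Together with `W` being antitone (values are nonnegative), this makes the damped
update `E` a contraction of `[0, ∞)` with constant `max α (1 - α)`; here `α < 1` because `OPT > 0`
forces `L > 0`. Banach's fixed-point theorem gives the stable price, the fixed points of `E` are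
exactly the solutions of `W(q) = m q`, and `W(0) ≤ W(q) + m q` yields `W(q*) ≥ OPT / 2`.
-/

open Set Function
open scoped NNReal Topology

section MaxSubsetSum

variable {ι : Type*} [Fintype ι] {m : ℕ} {w w' : ι → ℝ}

variable (m) in
noncomputable def maxSubsetSum (w : ι → ℝ) : ℝ :=
  ((Finset.univ : Finset ι).powerset.filter fun S => S.card ≤ m).sup' ⟨∅, by simp⟩
    fun S => ∑ i ∈ S, w i

lemma sum_le_maxSubsetSum {S : Finset ι} (hS : S.card ≤ m) :
    ∑ i ∈ S, w i ≤ maxSubsetSum m w :=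
  Finset.le_sup' (fun S => ∑ i ∈ S, w i) (by simpa using hS)

lemma maxSubsetSum_le_iff {x : ℝ} :
    maxSubsetSum m w ≤ x ↔ ∀ S : Finset ι, S.card ≤ m → ∑ i ∈ S, w i ≤ x := by
  simp [maxSubsetSum]

lemma exists_sum_eq_maxSubsetSum :
    ∃ S : Finset ι, S.card ≤ m ∧ ∑ i ∈ S, w i = maxSubsetSum m w := by
  obtain ⟨S, hS, hSw⟩ := Finset.exists_mem_eq_sup' (s := (Finset.univ : Finset ι).powerset.filter
    fun S => S.card ≤ m) ⟨∅, by simp⟩ fun S => ∑ i ∈ S, w i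
  exact ⟨S, (Finset.mem_filter.1 hS).2, hSw.symm⟩

lemma maxSubsetSum_nonneg : 0 ≤ maxSubsetSum m w := by
  simpa using sum_le_maxSubsetSum (w := w) (S := ∅) (Nat.zero_le m)

lemma maxSubsetSum_le_sum_abs : maxSubsetSum m w ≤ ∑ i, |w i| :=
  maxSubsetSum_le_iff.2 fun S _ =>
    (Finset.sum_le_sum fun i _ => le_abs_self (w i)).trans
      (Finset.sum_le_sum_of_subset_of_nonneg S.subset_univ fun i _ _ => abs_nonneg (w i))

lemma maxSubsetSum_mono (h : w ≤ w') : maxSubsetSum m w ≤ maxSubsetSum m w' :=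
  maxSubsetSum_le_iff.2 fun _ hS => (Finset.sum_le_sum fun i _ => h i).trans
    (sum_le_maxSubsetSum hS)

lemma maxSubsetSum_le_add {c : ℝ} (hc : 0 ≤ c) (h : ∀ i, w i ≤ w' i + c) :
    maxSubsetSum m w ≤ maxSubsetSum m w' + m * c := by
  refine maxSubsetSum_le_iff.2 fun S hS => ?_
  calc ∑ i ∈ S, w i ≤ ∑ i ∈ S, (w' i + c) := Finset.sum_le_sum fun i _ => h i
    _ = ∑ i ∈ S, w' i + S.card * c := by rw [Finset.sum_add_distrib, Finset.sum_const, nsmul_eq_mul]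
    _ ≤ maxSubsetSum m w' + m * c := by
      gcongr
      exact sum_le_maxSubsetSum hS

lemma measurable_maxSubsetSum {α : Type*} [MeasurableSpace α] {f : α → ι → ℝ}
    (hf : ∀ i, Measurable fun x => f x i) : Measurable fun x => maxSubsetSum m (f x) := by
  have h : (fun x => maxSubsetSum m (f x)) =
      ((Finset.univ : Finset ι).powerset.filter fun S => S.card ≤ m).sup' ⟨∅, by simp⟩
        fun S x => ∑ i ∈ S, f x i := by
    ext x
    exact (Finset.sup'_apply (C := fun _ => ℝ) _
      (fun S (x : α) => ∑ i ∈ S, f x i) x).symm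
  rw [h]
  exact Finset.measurable_sup' _ fun S _ => Finset.measurable_sum S fun i _ => hf i

end MaxSubsetSum

section Welfare

variable {n m : ℕ} {q : ℝ} {v : Fin n → ℝ}

lemma maxWelfare_eq_maxSubsetSum :
    maxWelfare n m q v = maxSubsetSum m fun i => if q ≤ v i then v i else 0 :=
  rfl

lemma maxWelfare_nonneg : 0 ≤ maxWelfare n m q v :=
  maxSubsetSum_nonneg

lemma maxWelfare_eq_add_maxSubsetSum (hq : 0 ≤ q) :
    maxWelfare n m q v = q * min m (demandCount n q v) + maxSubsetSum m fun i => (v i - q)⁺ := by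
  set A := Finset.univ.filter fun i => q ≤ v i
  have hD : demandCount n q v = A.card := rfl
  have card_le {S : Finset (Fin n)} (hS : S.card ≤ m) :
      (S.filter fun i => q ≤ v i).card ≤ min m (demandCount n q v) :=
    le_min ((Finset.card_filter_le _ _).trans hS)
      (Finset.card_le_card (Finset.filter_subset_filter _ S.subset_univ))
  have sum_eq (T : Finset (Fin n)) : ∑ i ∈ T, v i = ∑ i ∈ T, (v i - q) + T.card * q := by
    rw [Finset.sum_sub_distrib, Finset.sum_const, nsmul_eq_mul]
    ring
  apply le_antisymm
  · refine maxSubsetSum_le_iff.2 fun S hS => ?_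
    set T := S.filter fun i => q ≤ v i
    calc ∑ i ∈ S, (if q ≤ v i then v i else 0) = ∑ i ∈ T, v i := (Finset.sum_filter _ _).symm
      _ = ∑ i ∈ T, (v i - q) + T.card * q := sum_eq T
      _ ≤ ∑ i ∈ T, (v i - q)⁺ + (min m (demandCount n q v) : ℕ) * q := by
        gcongr with i
        · exact le_posPart _
        · exact card_le hS
      _ ≤ q * min m (demandCount n q v) + maxSubsetSum m fun i => (v i - q)⁺ := by
        rw [add_comm, mul_comm]
        gcongr
        exact sum_le_maxSubsetSum ((Finset.card_filter_le _ _).trans hS)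
  · obtain ⟨S, hS, hS_eq⟩ := exists_sum_eq_maxSubsetSum (m := m) (w := fun i => (v i - q)⁺)
    obtain ⟨T, hST, hTA, hT⟩ := Finset.exists_subsuperset_card_eq
      (Finset.filter_subset_filter _ S.subset_univ) (card_le hS) (hD ▸ min_le_right m A.card)
    have hTq : ∀ i ∈ T, q ≤ v i := fun i hi => (Finset.mem_filter.1 (hTA hi)).2
    -- bidders of `S` below the price contribute no surplus
    have hS_filter : ∑ i ∈ S.filter (fun i => q ≤ v i), (v i - q)⁺ = ∑ i ∈ S, (v i - q)⁺ :=
      Finset.sum_filter_of_ne fun i _ hi =>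
        sub_nonneg.1 (lt_of_not_ge (posPart_eq_zero.not.1 hi)).le
    calc q * min m (demandCount n q v) + maxSubsetSum m (fun i => (v i - q)⁺)
        ≤ ∑ i ∈ T, (v i - q)⁺ + T.card * q := by
          rw [← hS_eq, ← hS_filter, hT, add_comm, mul_comm]
          gcongr
      _ = ∑ i ∈ T, (if q ≤ v i then v i else 0) := by
        rw [Finset.sum_congr rfl fun i hi => posPart_eq_self.2 (sub_nonneg.2 (hTq i hi)),
          Finset.sum_congr rfl fun i hi => if_pos (hTq i hi), sum_eq]
      _ ≤ maxWelfare n m q v := sum_le_maxSubsetSum (hT ▸ min_le_left _ _)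

lemma maxWelfare_sub_le {a b : ℝ} (ha : 0 ≤ a) (hab : a ≤ b) :
    maxWelfare n m a v - a * min m (demandCount n a v) ≤
      maxWelfare n m b v - b * min m (demandCount n b v) + m * (b - a) := by
  rw [maxWelfare_eq_add_maxSubsetSum ha, maxWelfare_eq_add_maxSubsetSum (ha.trans hab)]
  have := maxSubsetSum_le_add (m := m) (sub_nonneg.2 hab)
    (w := fun i => (v i - a)⁺) (w' := fun i => (v i - b)⁺) fun i => by
      rw [posPart_def]
      exact sup_le (by linarith [le_posPart (v i - b)]) (by linarith [posPart_nonneg (v i - b)])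
  linarith

lemma maxWelfare_antitone (hv : 0 ≤ v) : Antitone fun q => maxWelfare n m q v := by
  intro q q' hqq'
  refine maxSubsetSum_mono fun i => ?_
  dsimp only
  split_ifs with h h' <;> first | exact le_rfl | exact hv i | exact absurd (hqq'.trans h) h'

lemma maxWelfare_zero_le (hq : 0 ≤ q) : maxWelfare n m 0 v ≤ maxWelfare n m q v + m * q :=
  maxSubsetSum_le_add hq fun i => by
    split_ifs <;> linarith

lemma maxWelfare_eq_zero_of_demandCount_eq_zero (h : demandCount n q v = 0) :
    maxWelfare n m q v = 0 := by
  have hv : ∀ i, ¬q ≤ v i := by simpa [demandCount] using h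
  simp only [maxWelfare_eq_maxSubsetSum, hv, if_false]
  exact le_antisymm (maxSubsetSum_le_iff.2 fun S _ => by simp) maxSubsetSum_nonneg

end Welfare

lemma integral_le_integral_add_of_ae_le_add {α : Type*} [MeasurableSpace α] {ν : Measure α}
    [IsProbabilityMeasure ν] {f g : α → ℝ} {c : ℝ} (hf : Integrable f ν) (hg : Integrable g ν)
    (h : ∀ᵐ x ∂ν, f x ≤ g x + c) : ∫ x, f x ∂ν ≤ ∫ x, g x ∂ν + c := by
  have := integral_mono_ae (g := fun x => g x + c) hf (hg.add (integrable_const c)) h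
  rwa [integral_add hg (integrable_const c), integral_const, probReal_univ, one_smul] at this

section Curves

variable {n m : ℕ} {μ : Measure ℝ} {q : ℝ}

lemma W_nonneg : 0 ≤ W n m μ q :=
  integral_nonneg fun _ => maxWelfare_nonneg

variable [IsProbabilityMeasure μ]

lemma measurable_demandCount : Measurable (demandCount n q) := by
  have h : demandCount n q = fun v => ∑ i, if q ≤ v i then 1 else 0 := by
    ext v
    rw [demandCount, Finset.card_filter]
  rw [h]
  exact Finset.measurable_sum _ fun i _ =>
    Measurable.ite (measurableSet_le measurable_const (measurable_pi_apply i))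
      measurable_const measurable_const

lemma integrable_min_demandCount :
    Integrable (fun v => ((min m (demandCount n q v) : ℕ) : ℝ)) (Measure.pi fun _ : Fin n => μ) :=
  (integrable_const (m : ℝ)).mono'
    ((measurable_from_top (f := fun k : ℕ => ((min m k : ℕ) : ℝ))).comp
      measurable_demandCount).aestronglyMeasurable
    (ae_of_all _ fun v => by
      rw [Real.norm_eq_abs, abs_of_nonneg (Nat.cast_nonneg _)]
      exact_mod_cast min_le_left m (demandCount n q v))

lemma integrable_maxWelfare (hint : Integrable (id : ℝ → ℝ) μ) (q : ℝ) :
    Integrable (maxWelfare n m q) (Measure.pi fun _ : Fin n => μ) := by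
  have hsum : Integrable (fun v : Fin n → ℝ => ∑ i, |v i|) (Measure.pi fun _ : Fin n => μ) :=
    integrable_finsetSum _ fun i _ =>
      (measurePreserving_eval (fun _ => μ) i).integrable_comp_of_integrable hint.abs
  have hmeas : Measurable (maxWelfare n m q) :=
    measurable_maxSubsetSum fun i => Measurable.ite
      (measurableSet_le measurable_const (measurable_pi_apply i)) (measurable_pi_apply i)
      measurable_const
  refine hsum.mono' hmeas.aestronglyMeasurable (ae_of_all _ fun v => ?_)
  rw [Real.norm_eq_abs, abs_of_nonneg maxWelfare_nonneg]
  refine maxSubsetSum_le_sum_abs.trans (Finset.sum_le_sum fun i _ => ?_)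
  split_ifs <;> simp

lemma W_antitone (hint : Integrable (id : ℝ → ℝ) μ) (hpos : ∀ᵐ x ∂μ, 0 ≤ x) :
    Antitone (W n m μ) := fun _ _ hqq' =>
  integral_mono_ae (integrable_maxWelfare hint _) (integrable_maxWelfare hint _) <|
    (ae_all_iff.2 fun _ => Measure.tendsto_eval_ae_ae.eventually hpos).mono
      fun _ hv => maxWelfare_antitone hv hqq'

lemma W_zero_le (hint : Integrable (id : ℝ → ℝ) μ) (hq : 0 ≤ q) :
    W n m μ 0 ≤ W n m μ q + m * q :=
  integral_le_integral_add_of_ae_le_add (integrable_maxWelfare hint 0)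
    (integrable_maxWelfare hint q) (ae_of_all _ fun _ => maxWelfare_zero_le hq)

lemma W_sub_le {a b : ℝ} (hint : Integrable (id : ℝ → ℝ) μ) (ha : 0 ≤ a) (hab : a ≤ b) :
    W n m μ a - W n m μ b ≤ rev n m μ a - rev n m μ b + m * (b - a) := by
  have key := integral_le_integral_add_of_ae_le_add
    (f := fun v => maxWelfare n m a v - a * min m (demandCount n a v))
    (g := fun v => maxWelfare n m b v - b * min m (demandCount n b v))
    ((integrable_maxWelfare hint a).sub (integrable_min_demandCount.const_mul a))
    ((integrable_maxWelfare hint b).sub (integrable_min_demandCount.const_mul b))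
    (ae_of_all _ fun v => maxWelfare_sub_le (n := n) (m := m) (v := v) ha hab)
  rw [integral_sub (integrable_maxWelfare hint a) (integrable_min_demandCount.const_mul a),
    integral_sub (integrable_maxWelfare hint b) (integrable_min_demandCount.const_mul b),
    integral_const_mul, integral_const_mul] at key
  simp only [W, rev, mde]
  linarith

lemma W_eq_zero_of_mde_eq_zero (hm : 0 < m) (h : mde n m μ q = 0) : W n m μ q = 0 := by
  have hD := (integral_eq_zero_iff_of_nonneg (fun _ => Nat.cast_nonneg _)
    integrable_min_demandCount).1 h
  refine integral_eq_zero_of_ae (hD.mono fun v hv => ?_)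
  replace hv : ((min m (demandCount n q v) : ℕ) : ℝ) = 0 := hv
  have hmin : min m (demandCount n q v) = 0 := by exact_mod_cast hv
  exact maxWelfare_eq_zero_of_demandCount_eq_zero (by omega)

end Curves

section Revenue

variable {n m : ℕ} {μ : Measure ℝ} [IsProbabilityMeasure μ] {L : ℝ}

/-- If `L ≤ 0` the revenue curve vanishes, so almost surely nobody bids at any positive price
and `OPT = W 0 ≤ W p + m p = m p` for every `p > 0`. -/
lemma pos_of_rev_lipschitz (hm : 0 < m) (hint : Integrable (id : ℝ → ℝ) μ)
    (hOPT : 0 < W n m μ 0)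
    (hlip : ∀ x ∈ Ici (0 : ℝ), ∀ y ∈ Ici (0 : ℝ), |rev n m μ x - rev n m μ y| ≤ L * |x - y|) :
    0 < L := by
  by_contra! hL
  have hm0 : (0 : ℝ) < m := Nat.cast_pos.2 hm
  have hW (p : ℝ) (hp : 0 < p) : W n m μ p = 0 := by
    refine W_eq_zero_of_mde_eq_zero hm ?_
    have h := hlip p hp.le 0 self_mem_Ici
    simp only [rev, zero_mul, sub_zero, abs_mul, abs_of_pos hp] at h
    have : |mde n m μ p| ≤ 0 := by nlinarith [abs_nonneg (mde n m μ p)]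
    exact abs_nonpos_iff.1 this
  refine hOPT.not_ge (le_of_forall_pos_le_add fun ε hε => ?_)
  have h := W_zero_le (n := n) (m := m) (μ := μ) hint (div_pos hε hm0).le
  rwa [hW _ (div_pos hε hm0), mul_div_cancel₀ _ hm0.ne'] at h

lemma W_sub_le_mul (hint : Integrable (id : ℝ → ℝ) μ)
    (hlip : ∀ x ∈ Ici (0 : ℝ), ∀ y ∈ Ici (0 : ℝ), |rev n m μ x - rev n m μ y| ≤ L * |x - y|) :
    ∀ a ∈ Ici (0 : ℝ), ∀ b ∈ Ici (0 : ℝ), a ≤ b → W n m μ a - W n m μ b ≤ (L + m) * (b - a) := by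
  intro a ha b hb hab
  have hrev := (le_abs_self _).trans (hlip a ha b hb)
  rw [abs_of_nonpos (sub_nonpos.2 hab)] at hrev
  linarith [W_sub_le (n := n) (m := m) (μ := μ) hint ha hab]

end Revenue

lemma lipschitzOnWith_damped_of_antitoneOn {s : Set ℝ} {g : ℝ → ℝ} {β γ K : ℝ} {c : ℝ≥0}
    (hg : AntitoneOn g s) (hgK : ∀ a ∈ s, ∀ b ∈ s, a ≤ b → g a - g b ≤ K * (b - a))
    (hβ : 0 ≤ β) (hβK : β * K ≤ 1) (hγ : γ ≤ c) (hγ' : 1 - γ ≤ c) :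
    LipschitzOnWith c (fun x => β * g x + γ * x) s := by
  refine LipschitzOnWith.of_dist_le_mul fun x hx y hy => ?_
  wlog hxy : x ≤ y generalizing x y
  · rw [dist_comm, dist_comm x]
    exact this y hy x hx (le_of_not_ge hxy)
  have hd : 0 ≤ y - x := sub_nonneg.2 hxy
  have hgxy := hg hx hy hxy
  have hlow : -(β * (K * (y - x))) ≤ β * (g y - g x) := by
    rw [← mul_neg]
    exact mul_le_mul_of_nonneg_left (by linarith [hgK x hx y hy hxy]) hβ
  have hup : β * (g y - g x) ≤ 0 := mul_nonpos_of_nonneg_of_nonpos hβ (by linarith)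
  rw [Real.dist_eq, Real.dist_eq, abs_sub_comm, abs_of_nonpos (sub_nonpos.2 hxy), neg_sub,
    abs_le]
  constructor <;> nlinarith

theorem exists_fixedPoint_of_lipschitzOnWith {α : Type*} [MetricSpace α] {s : Set α}
    (hs : IsComplete s) (hne : s.Nonempty) {f : α → α} (hf : MapsTo f s s) {K : ℝ≥0} (hK : K < 1)
    (hfK : LipschitzOnWith K f s) :
    ∃ x ∈ s, IsFixedPt f x ∧ (∀ y ∈ s, IsFixedPt f y → y = x) ∧
      ∀ y ∈ s, Tendsto (fun k => f^[k] y) atTop (𝓝 x) := by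
  have := hs.completeSpace_coe
  have := hne.to_subtype
  have hc : ContractingWith K (hf.restrict f s s) := ⟨hK, fun x y => hfK x.2 y.2⟩
  refine ⟨hc.fixedPoint _, (hc.fixedPoint _).2, congrArg Subtype.val hc.fixedPoint_isFixedPt,
    fun y hy hfy => congrArg Subtype.val (hc.fixedPoint_unique (x := ⟨y, hy⟩) (Subtype.ext hfy)),
    fun y hy => ?_⟩
  convert (continuous_subtype_val.tendsto _).comp (hc.tendsto_iterate_fixedPoint ⟨y, hy⟩) with k
  simp only [comp_apply, MapsTo.iterate_restrict, MapsTo.val_restrict_apply]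

section Update

variable {n m : ℕ} {μ : Measure ℝ} {L α : ℝ} {E : ℝ → ℝ}

lemma mapsTo_Ici_of_wdpp_update (hα0 : 0 ≤ α) (hα1 : α ≤ 1)
    (hE : ∀ q, E q = α * (W n m μ q / m) + (1 - α) * q) : MapsTo E (Ici 0) (Ici 0) :=
  fun q (hq : 0 ≤ q) => by
    rw [mem_Ici, hE]
    have := W_nonneg (n := n) (m := m) (μ := μ) (q := q)
    have : 0 ≤ 1 - α := by linarith
    positivity

lemma isFixedPt_wdpp_update_iff (hm : m ≠ 0) (hα : α ≠ 0)
    (hE : ∀ q, E q = α * (W n m μ q / m) + (1 - α) * q) (q : ℝ) :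
    IsFixedPt E q ↔ W n m μ q = m * q := by
  have hm' : (m : ℝ) ≠ 0 := Nat.cast_ne_zero.2 hm
  have key : α * (W n m μ q / m) + (1 - α) * q - q = α / m * (W n m μ q - m * q) := by
    field_simp
    ring
  rw [IsFixedPt, hE, ← sub_eq_zero, key, mul_eq_zero, sub_eq_zero]
  simp [hα, hm']

variable [IsProbabilityMeasure μ]

lemma lipschitzOnWith_wdpp_update (hm : 0 < m) (hint : Integrable (id : ℝ → ℝ) μ)
    (hpos : ∀ᵐ x ∂μ, 0 ≤ x) (hL : 0 ≤ L)
    (hlip : ∀ x ∈ Ici (0 : ℝ), ∀ y ∈ Ici (0 : ℝ), |rev n m μ x - rev n m μ y| ≤ L * |x - y|)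
    (hα0 : 0 ≤ α) (hα1 : α ≤ 1 / (L / m + 1))
    (hE : ∀ q, E q = α * (W n m μ q / m) + (1 - α) * q) :
    LipschitzOnWith (max α (1 - α)).toNNReal E (Ici 0) := by
  have hm0 : (0 : ℝ) < m := Nat.cast_pos.2 hm
  have hαK : α / m * (L + m) ≤ 1 :=
    calc α / m * (L + m) = α * (L / m + 1) := by field_simp
      _ ≤ 1 := (le_div_iff₀ (by positivity)).1 hα1
  have hE_damped : E = fun q => α / m * W n m μ q + (1 - α) * q := by
    ext q
    rw [hE]
    ring
  rw [hE_damped]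
  exact lipschitzOnWith_damped_of_antitoneOn ((W_antitone hint hpos).antitoneOn _)
    (W_sub_le_mul hint hlip) (by positivity) hαK
    ((le_max_right _ _).trans (Real.le_coe_toNNReal _))
    (by rw [sub_sub_cancel]; exact (le_max_left _ _).trans (Real.le_coe_toNNReal _))

end Update

theorem wdpp_stable_and_welfare_general
    (n m : ℕ) (hm : 1 ≤ m) (μ : Measure ℝ) [IsProbabilityMeasure μ]
    (hpos : ∀ᵐ x ∂μ, 0 ≤ x) (hint : Integrable (id : ℝ → ℝ) μ)
    (hOPT : 0 < W n m μ 0)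
    (L : ℝ)
    (hlip : ∀ x ∈ Set.Ici (0 : ℝ), ∀ y ∈ Set.Ici (0 : ℝ),
      |rev n m μ x - rev n m μ y| ≤ L * |x - y|)
    (α : ℝ) (hα0 : 0 < α) (hα1 : α ≤ 1 / (L / m + 1))
    (E : ℝ → ℝ) (hE : ∀ q, E q = α * (W n m μ q / m) + (1 - α) * q) :
    ∃ qs : ℝ, 0 < qs ∧ W n m μ qs = m * qs ∧ W n m μ 0 / 2 ≤ W n m μ qs ∧
      (∀ q₀, 0 < q₀ → Tendsto (fun k => E^[k] q₀) atTop (nhds qs)) ∧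
      (∀ q', 0 < q' → W n m μ q' = m * q' → q' = qs) := by
  have hL := pos_of_rev_lipschitz hm hint hOPT hlip
  have hα_lt : α < 1 :=
    hα1.trans_lt ((div_lt_one (by positivity)).2 (lt_add_of_pos_left 1 (by positivity)))
  obtain ⟨qs, hqs0, hfix, huniq, htend⟩ := exists_fixedPoint_of_lipschitzOnWith
    isClosed_Ici.isComplete nonempty_Ici (mapsTo_Ici_of_wdpp_update hα0.le hα_lt.le hE)
    (Real.toNNReal_lt_one.2 (max_lt hα_lt (by linarith)))
    (lipschitzOnWith_wdpp_update hm hint hpos hL.le hlip hα0.le hα1 hE)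
  have hfix_iff := isFixedPt_wdpp_update_iff (μ := μ) (Nat.one_le_iff_ne_zero.1 hm) hα0.ne' hE
  have hWqs := (hfix_iff qs).1 hfix
  have hqs : 0 < qs := hqs0.lt_of_ne fun h => by simp [← h] at hWqs; linarith
  refine ⟨qs, hqs, hWqs, ?_, fun q₀ hq₀ => htend q₀ hq₀.le,
    fun q' hq' hWq' => huniq q' hq'.le ((hfix_iff q').2 hWq')⟩
  linarith [W_zero_le (n := n) (m := m) (μ := μ) hint hqs0]

/-- Theorem (WDPP stability and welfare): if the revenue curve is `L`-Lipschitz and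
`0 < α ≤ 1/(L/m + 1)`, the WDPP expected price update `E(q) = α·W(q)/m + (1-α)·q` has
a unique equilibrium price `q* > 0`, the iterates of `E` from any positive start
converge to `q*`, and `W(q*) = m·q*` with `W(q*) ≥ OPT/2` where `OPT = W(0)`. -/
theorem wdpp_stable_and_welfare
    (n m : ℕ) (hm : 1 ≤ m) (μ : Measure ℝ) [IsProbabilityMeasure μ]
    (hpos : ∀ᵐ x ∂μ, 0 ≤ x) (hint : Integrable (id : ℝ → ℝ) μ)
    (hOPT : 0 < W n m μ 0)
    (L : ℝ) (hL : 0 ≤ L)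
    (hlip : ∀ x ∈ Set.Ici (0 : ℝ), ∀ y ∈ Set.Ici (0 : ℝ),
      |rev n m μ x - rev n m μ y| ≤ L * |x - y|)
    (α : ℝ) (hα0 : 0 < α) (hα1 : α ≤ 1 / (L / m + 1))
    (E : ℝ → ℝ) (hE : ∀ q, E q = α * (W n m μ q / m) + (1 - α) * q) :
    ∃ qs : ℝ, 0 < qs ∧ W n m μ qs = m * qs ∧ W n m μ 0 / 2 ≤ W n m μ qs ∧
      (∀ q₀, 0 < q₀ → Tendsto (fun k => E^[k] q₀) atTop (nhds qs)) ∧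
      (∀ q', 0 < q' → W n m μ q' = m * q' → q' = qs) :=
  wdpp_stable_and_welfare_general n m hm μ hpos hint hOPT L hlip α hα0 hα1 E hE
end

section
/- Let v > 0, α ∈ (0, 1), and δ > 0. Define h : ℝ → ℝ by h(q) = (1 + α·δ)·q if q ≤ v and h(q) = (1 − α)·q if q > v, and define w : ℝ → ℝ by w(q) = α·v + (1 − α)·q if q ≤ v and w(q) = (1 − α)·q if q > v. Then: (a) for every q₀ > 0, the sequence of iterates q₀, h(q₀), h(h(q₀)), … does not converge; (b) for every q₀ > 0, the sequence of iterates q₀, w(q₀), w(w(q₀)), … converges (its limit is v). -/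
/-!
Along a convergent orbit the steps `f q - q` tend to `0`. Every step of `h` from a positive
price `q` has size at least `min (α δ) α * q`, so a convergent positive orbit of `h` can only
tend to `0`; but below `v` the map `h` multiplies by `1 + α δ > 1`, so a positive orbit cannot
approach `0`. For `w`, the half-line `q ≤ v` is invariant and `w` contracts it towards `v` by the
factor `1 - α`, while above `v` it multiplies by `1 - α < 1`, so every orbit enters that half-line.
-/

open Filter Topology

theorem Filter.Tendsto.succ_sub {G : Type*} [AddGroup G] [TopologicalSpace G]
    [IsTopologicalAddGroup G] {x : ℕ → G} {z : G} (hx : Tendsto x atTop (𝓝 z)) :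
    Tendsto (fun k => x (k + 1) - x k) atTop (𝓝 0) := by
  simpa using ((tendsto_add_atTop_iff_nat 1).mpr hx).sub hx

theorem eq_zero_of_tendsto_of_mul_abs_le_abs_succ_sub {x : ℕ → ℝ} {c z : ℝ} (hc : 0 < c)
    (hstep : ∀ k, c * |x k| ≤ |x (k + 1) - x k|) (hx : Tendsto x atTop (𝓝 z)) : z = 0 := by
  have hle : c * |z| ≤ 0 := by
    simpa using le_of_tendsto_of_tendsto' ((hx.abs).const_mul c) hx.succ_sub.abs hstep
  exact abs_eq_zero.mp (le_antisymm (nonpos_of_mul_nonpos_right hle hc) (abs_nonneg z))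

theorem not_tendsto_zero_of_pos_of_eventually_le_succ {x : ℕ → ℝ} (hpos : ∀ k, 0 < x k)
    (hmono : ∀ᶠ k in atTop, x k ≤ x (k + 1)) : ¬ Tendsto x atTop (𝓝 0) := by
  intro hx
  obtain ⟨N, hN⟩ := hmono.exists_forall_of_atTop
  have htail : Monotone fun j => x (j + N) :=
    monotone_nat_of_le_succ fun j => by simpa [Nat.add_right_comm] using hN (j + N) (by omega)
  have := htail.ge_of_tendsto ((tendsto_add_atTop_iff_nat N).mpr hx) 0
  linarith [hpos (0 + N)]

theorem iterate_sub_eq_pow_mul {f : ℝ → ℝ} {p b x : ℝ}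
    (hf : ∀ k, f (f^[k] x) - p = b * (f^[k] x - p)) (k : ℕ) :
    f^[k] x - p = b ^ k * (x - p) := by
  induction k with
  | zero => simp
  | succ k ih => rw [Function.iterate_succ_apply', hf, ih, pow_succ]; ring

section Expanding

variable {v a b : ℝ} {f : ℝ → ℝ} (hf : ∀ q, f q = if q ≤ v then a * q else b * q)
include hf

theorem mapsTo_Ioi_zero_of_expanding (ha : 0 < a) (hb : 0 < b) :
    Set.MapsTo f (Set.Ioi 0) (Set.Ioi 0) := by
  intro q (hq : 0 < q)
  rw [Set.mem_Ioi, hf]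
  split_ifs <;> positivity

theorem min_mul_le_abs_sub_of_expanding (ha : 1 < a) (hb : b < 1) {q : ℝ} (hq : 0 < q) :
    min (a - 1) (1 - b) * |q| ≤ |f q - q| := by
  rw [hf, abs_of_pos hq]
  split_ifs
  · rw [show a * q - q = (a - 1) * q by ring, abs_of_pos (by nlinarith)]
    exact mul_le_mul_of_nonneg_right (min_le_left _ _) hq.le
  · rw [show b * q - q = -((1 - b) * q) by ring, abs_neg, abs_of_pos (by nlinarith)]
    exact mul_le_mul_of_nonneg_right (min_le_right _ _) hq.le

theorem not_tendsto_iterate_of_expanding (hv : 0 < v) (ha : 1 < a) (hb0 : 0 < b) (hb1 : b < 1)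
    {q₀ : ℝ} (hq₀ : 0 < q₀) (z : ℝ) : ¬ Tendsto (fun k => f^[k] q₀) atTop (𝓝 z) := by
  intro hz
  have hpos : ∀ k, 0 < f^[k] q₀ := fun k =>
    (mapsTo_Ioi_zero_of_expanding hf (by linarith) hb0).iterate k hq₀
  have hstep : ∀ k, min (a - 1) (1 - b) * |f^[k] q₀| ≤ |f^[k + 1] q₀ - f^[k] q₀| := fun k => by
    rw [Function.iterate_succ_apply']
    exact min_mul_le_abs_sub_of_expanding hf ha hb1 (hpos k)
  obtain rfl : z = 0 :=
    eq_zero_of_tendsto_of_mul_abs_le_abs_succ_sub (lt_min (by linarith) (by linarith)) hstep hz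
  refine not_tendsto_zero_of_pos_of_eventually_le_succ hpos ?_ hz
  filter_upwards [hz.eventually_le_const hv] with k hk
  rw [Function.iterate_succ_apply', hf, if_pos hk]
  nlinarith [hpos k]

end Expanding

section Contracting

variable {v α : ℝ} {w : ℝ → ℝ}
  (hw : ∀ q, w q = if q ≤ v then α * v + (1 - α) * q else (1 - α) * q)
include hw

theorem tendsto_iterate_of_le (hα0 : 0 < α) (hα1 : α ≤ 1) {q : ℝ} (hq : q ≤ v) :
    Tendsto (fun k => w^[k] q) atTop (𝓝 v) := by
  have hmaps : Set.MapsTo w (Set.Iic v) (Set.Iic v) := by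
    intro q (hq : q ≤ v)
    rw [Set.mem_Iic, hw, if_pos hq]
    nlinarith
  have hform := iterate_sub_eq_pow_mul (f := w) (p := v) (b := 1 - α) (x := q) fun k => by
    rw [hw, if_pos (show w^[k] q ≤ v from hmaps.iterate k hq)]
    ring
  have hlim : Tendsto (fun k => (1 - α) ^ k * (q - v) + v) atTop (𝓝 (0 * (q - v) + v)) :=
    ((tendsto_pow_atTop_nhds_zero_of_lt_one (r := 1 - α) (by linarith) (by linarith)).mul_const
      _).add_const v
  simpa [← hform] using hlim

theorem exists_iterate_le (hv : 0 < v) (hα0 : 0 < α) (hα1 : α ≤ 1) (q₀ : ℝ) :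
    ∃ k, w^[k] q₀ ≤ v := by
  by_contra! habove
  have hform := iterate_sub_eq_pow_mul (f := w) (p := 0) (b := 1 - α) (x := q₀) fun k => by
    rw [hw, if_neg (habove k).not_ge]
    ring
  simp only [sub_zero] at hform
  have hlim : Tendsto (fun k => w^[k] q₀) atTop (𝓝 0) := by
    simpa [hform] using
      (tendsto_pow_atTop_nhds_zero_of_lt_one (r := 1 - α) (by linarith) (by linarith)).mul_const q₀
  obtain ⟨k, hk⟩ := (hlim.eventually_lt_const hv).exists
  exact (habove k).not_gt hk

theorem tendsto_iterate_of_contracting (hv : 0 < v) (hα0 : 0 < α) (hα1 : α ≤ 1) (q₀ : ℝ) :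
    Tendsto (fun k => w^[k] q₀) atTop (𝓝 v) := by
  obtain ⟨k₀, hk₀⟩ := exists_iterate_le hw hv hα0 hα1 q₀
  refine (tendsto_add_atTop_iff_nat k₀).mp ?_
  simpa only [Function.iterate_add_apply] using tendsto_iterate_of_le hw hα0 hα1 hk₀

end Contracting

/-- Proposition (instability, concrete form): with one slot and two bidders of
deterministic value `v`, the UDPP expected price-update `h` never converges from any
positive start, while the WDPP expected price-update `w` always converges (to `v`). -/
theorem udpp_unstable_wdpp_stable_pointmass
    (v α δ : ℝ) (hv : 0 < v) (hα : α ∈ Set.Ioo (0 : ℝ) 1) (hδ : 0 < δ)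
    (h w : ℝ → ℝ)
    (hh : ∀ q, h q = if q ≤ v then (1 + α * δ) * q else (1 - α) * q)
    (hw : ∀ q, w q = if q ≤ v then α * v + (1 - α) * q else (1 - α) * q) :
    (∀ q₀, 0 < q₀ → ¬ ∃ z, Tendsto (fun k => h^[k] q₀) atTop (nhds z)) ∧
    (∀ q₀, 0 < q₀ → Tendsto (fun k => w^[k] q₀) atTop (nhds v)) := by
  obtain ⟨hα0, hα1⟩ := hα
  have hαδ : 1 < 1 + α * δ := by nlinarith
  refine ⟨fun q₀ hq₀ ⟨z, hz⟩ => ?_, fun q₀ _ => ?_⟩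
  · exact not_tendsto_iterate_of_expanding hh hv hαδ (by linarith) (by linarith) hq₀ z hz
  · exact tendsto_iterate_of_contracting hw hv hα0 hα1.le q₀
end

section
/- There exist integers n, m with 1 ≤ n < m, a probability measure μ on [0, ∞), and parameters α ∈ (0, 1) and δ > 0 such that: for every starting price q₀ > 0 the iterates of the truncated welfare-based expected update E_ttw(q) = α·ktw_δ(q) + (1 − α)·q converge, but there exists a starting price q₀ > 0 for which the iterates of the utilization-based expected update E_tu(q) = α·(1 + δ)·rev(q)/m + (1 − α)·q do not converge. -/
/-!
Take one bidder whose value is `1`, two slots, `α = 1/2` and `δ = 5`. Below the value the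
UDPP update doubles the price and above it halves it, so `1 ↦ 2 ↦ 1` is a 2-cycle. The TWDPP
update doubles prices below `1/6`, halves prices above `1`, and acts as `q ↦ 1/4 + q/2` on
`[1/6, 1]`; hence every positive orbit enters `[1/6, 1]` and then contracts to `1/2`.
-/

open MeasureTheory Filter

/-- Truncated welfare kernel of the TWDPP mechanism. -/
noncomputable def ktw (n m : ℕ) (δ : ℝ) (μ : Measure ℝ) (q : ℝ) : ℝ :=
  ∫ v, (if demandCount n q v < m then
          (1 / (m : ℝ)) * ∑ i ∈ Finset.univ.filter (fun i => q ≤ v i),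
            min (v i) ((1 + δ) * q)
        else (1 + δ) * q) ∂(Measure.pi fun _ : Fin n => μ)

open Topology Set

theorem MeasureTheory.Measure.pi_dirac {ι α : Type*} [Fintype ι] [MeasurableSpace α] (a : α) :
    Measure.pi (fun _ : ι => Measure.dirac a) = Measure.dirac (fun _ => a) := by
  classical
  refine Measure.pi_eq fun s hs => ?_
  simp [Measure.dirac_apply' _ (MeasurableSet.univ_pi hs), Measure.dirac_apply' _ (hs _),
    Set.indicator, Fintype.prod_boole]

theorem not_tendsto_iterate_of_two_cycle {α : Type*} [TopologicalSpace α] [T2Space α] {f : α → α}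
    {x y : α} (hxy : f x = y) (hyx : f y = x) (hne : x ≠ y) :
    ¬ ∃ z, Tendsto (fun k => f^[k] x) atTop (𝓝 z) := by
  rintro ⟨z, hz⟩
  have hper : Function.IsPeriodicPt f 2 x := by
    simp [Function.IsPeriodicPt, Function.IsFixedPt, hxy, hyx]
  have heven : ∀ k, f^[2 * k] x = x := fun k => (hper.mul_const k).eq
  have hodd : ∀ k, f^[2 * k + 1] x = y := fun k => by
    rw [Function.iterate_succ_apply', heven, hxy]
  have htwice : Tendsto (fun k : ℕ => 2 * k) atTop atTop := tendsto_id.const_mul_atTop' two_pos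
  have hx : x = z := tendsto_const_nhds_iff.mp ((hz.comp htwice).congr heven)
  have hy : y = z :=
    tendsto_const_nhds_iff.mp ((hz.comp ((tendsto_add_atTop_nat 1).comp htwice)).congr hodd)
  exact hne (hx.trans hy.symm)

section PointMass

variable {n m : ℕ} (q a : ℝ)

theorem demandCount_const : demandCount n q (fun _ => a) = if q ≤ a then n else 0 := by
  by_cases h : q ≤ a <;> simp [demandCount, h]

theorem mde_dirac : mde n m (Measure.dirac a) q = if q ≤ a then ((min m n : ℕ) : ℝ) else 0 := by
  rw [mde, Measure.pi_dirac, integral_dirac, demandCount_const]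
  split_ifs <;> simp

theorem ktw_dirac_of_lt (hnm : n < m) (δ : ℝ) :
    ktw n m δ (Measure.dirac a) q = if q ≤ a then n / m * min a ((1 + δ) * q) else 0 := by
  rw [ktw, Measure.pi_dirac, integral_dirac, demandCount_const]
  by_cases h : q ≤ a
  · simp only [h, hnm, if_true, Finset.filter_true, Finset.sum_const, Finset.card_univ,
      Fintype.card_fin, nsmul_eq_mul]
    ring
  · simp [h, Nat.zero_lt_of_lt hnm]

end PointMass

noncomputable def twStep (q : ℝ) : ℝ :=
  1 / 2 * ktw 1 2 5 (Measure.dirac 1) q + (1 - 1 / 2) * q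

noncomputable def uStep (q : ℝ) : ℝ :=
  1 / 2 * ((1 + 5) * rev 1 2 (Measure.dirac 1) q / (2 : ℕ)) + (1 - 1 / 2) * q

theorem twStep_of_lt {q : ℝ} (hq : q < 1 / 6) : twStep q = 2 * q := by
  rw [twStep, ktw_dirac_of_lt _ _ one_lt_two, if_pos (by linarith), min_eq_right (by linarith)]
  push_cast
  ring

theorem twStep_of_mem_Icc {q : ℝ} (hq : q ∈ Icc (1 / 6) 1) : twStep q = 1 / 4 + q / 2 := by
  rw [twStep, ktw_dirac_of_lt _ _ one_lt_two, if_pos hq.2, min_eq_left (by linarith [hq.1])]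
  push_cast
  ring

theorem twStep_of_one_lt {q : ℝ} (hq : 1 < q) : twStep q = q / 2 := by
  rw [twStep, ktw_dirac_of_lt _ _ one_lt_two, if_neg (not_le.mpr hq)]
  ring

theorem uStep_one : uStep 1 = 2 := by
  norm_num [uStep, rev, mde_dirac]

theorem uStep_two : uStep 2 = 1 := by
  norm_num [uStep, rev, mde_dirac]

theorem mapsTo_twStep_Icc : MapsTo twStep (Icc (1 / 6) 1) (Icc (1 / 6) 1) := fun q hq => by
  rw [twStep_of_mem_Icc hq]
  constructor <;> linarith [hq.1, hq.2]

theorem twStep_iterate_sub_half {q : ℝ} (hq : q ∈ Icc (1 / 6) 1) (k : ℕ) :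
    twStep^[k] q - 1 / 2 = (1 / 2) ^ k * (q - 1 / 2) := by
  induction k with
  | zero => simp
  | succ k ih =>
    rw [Function.iterate_succ_apply', twStep_of_mem_Icc (mapsTo_twStep_Icc.iterate k hq), pow_succ]
    linear_combination ih / 2

theorem tendsto_twStep_iterate_of_mem_Icc {q : ℝ} (hq : q ∈ Icc (1 / 6) 1) :
    Tendsto (fun k => twStep^[k] q) atTop (𝓝 (1 / 2)) := by
  have h := ((tendsto_pow_atTop_nhds_zero_of_lt_one (by norm_num) (by norm_num : (1 / 2 : ℝ) < 1)
    ).mul_const (q - 1 / 2)).add_const (1 / 2)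
  rw [zero_mul, zero_add] at h
  exact h.congr fun k => by linarith [twStep_iterate_sub_half hq k]

-- `k` bounds the number of doublings or halvings needed to reach `[1/6, 1]`.
theorem exists_twStep_iterate_mem_Icc (k : ℕ) {q : ℝ} (hq₀ : 0 < q) (hq : q ≤ 2 ^ k)
    (hq' : 1 / 6 ≤ 2 ^ k * q) : ∃ K, twStep^[K] q ∈ Icc (1 / 6) 1 := by
  induction k generalizing q with
  | zero => exact ⟨0, by simpa using hq', by simpa using hq⟩
  | succ k ih =>
    have hpow : (1 : ℝ) ≤ 2 ^ k := one_le_pow₀ one_le_two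
    obtain ⟨K, hK⟩ : ∃ K, twStep^[K] (twStep q) ∈ Icc (1 / 6) 1 := by
      rcases lt_or_ge q (1 / 6) with hlow | hge
      · rw [twStep_of_lt hlow]
        exact ih (by linarith) (by linarith) (by rw [pow_succ] at hq'; linarith)
      rcases le_or_gt q 1 with hle | hhigh
      · exact ⟨0, mapsTo_twStep_Icc ⟨hge, hle⟩⟩
      · rw [twStep_of_one_lt hhigh]
        exact ih (by linarith) (by rw [pow_succ] at hq; linarith) (by nlinarith)
    exact ⟨K + 1, hK⟩

theorem tendsto_twStep_iterate {q : ℝ} (hq : 0 < q) :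
    Tendsto (fun k => twStep^[k] q) atTop (𝓝 (1 / 2)) := by
  obtain ⟨k, hk⟩ := pow_unbounded_of_one_lt (max q (1 / (6 * q))) (one_lt_two (α := ℝ))
  obtain ⟨K, hK⟩ := exists_twStep_iterate_mem_Icc k hq (le_max_left _ _ |>.trans hk.le)
    (by rw [← div_le_iff₀ hq, div_div]; exact (le_max_right _ _).trans hk.le)
  rw [← tendsto_add_atTop_iff_nat K]
  simpa only [Function.iterate_add_apply] using tendsto_twStep_iterate_of_mem_Icc hK

/-- Proposition: there is a market with demand `n` smaller than supply `m` on which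
the TWDPP expected price iteration converges from every positive starting price,
while the UDPP expected price iteration fails to converge from some positive
starting price. -/
theorem twdpp_stable_udpp_unstable :
    ∃ (n m : ℕ) (μ : Measure ℝ) (α δ : ℝ),
      1 ≤ n ∧ n < m ∧ IsProbabilityMeasure μ ∧ (∀ᵐ x ∂μ, 0 ≤ x) ∧
      α ∈ Set.Ioo (0 : ℝ) 1 ∧ 0 < δ ∧
      (∀ q₀, 0 < q₀ → ∃ z : ℝ,
        Tendsto (fun k => (fun q => α * ktw n m δ μ q + (1 - α) * q)^[k] q₀)
          atTop (nhds z)) ∧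
      (∃ q₀, 0 < q₀ ∧ ¬ ∃ z : ℝ,
        Tendsto (fun k => (fun q => α * ((1 + δ) * rev n m μ q / m) + (1 - α) * q)^[k] q₀)
          atTop (nhds z)) := by
  refine ⟨1, 2, Measure.dirac 1, 1 / 2, 5, le_rfl, one_lt_two, inferInstance,
    (ae_dirac_iff measurableSet_Ici).mpr zero_le_one, by norm_num, by norm_num,
    fun q₀ hq₀ => ⟨1 / 2, tendsto_twStep_iterate hq₀⟩,
    ⟨1, one_pos, not_tendsto_iterate_of_two_cycle uStep_one uStep_two (by norm_num)⟩⟩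
end

section
/- Assume the bidder values lie in [0, ā] μ-almost surely, and suppose the truncated welfare kernel ktw_δ is L-Lipschitz on [0, ∞) and strictly concave on [0, ā]. Let 0 < α ≤ 1/(L + 1) and define the expected truncated welfare-based price update E(q) = α·ktw_δ(q) + (1 − α)·q. Then for every starting price q₀ > 0 the iterates q₀, E(q₀), E(E(q₀)), … converge to a point q* satisfying ktw_δ(q*) = q*. -/
/-!
The expected price update `E(q) = α·ktw(q) + (1 - α)·q` is monotone on `[0, ∞)` as soon as
`α (L + 1) ≤ 1`, since the Lipschitz bound caps how fast `α·ktw` can decrease. The kernel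
vanishes at `0` and above the support bound `abar`, where no bidder demands, so `E` maps every
interval `[0, M]` with `M > abar` into itself. A monotone continuous self-map of a compact
interval has monotone, hence convergent, orbits, and by continuity their limits are fixed points
of `E`, that is, of the kernel.
-/

open MeasureTheory Filter

open Set Function Topology

theorem MonotoneOn.exists_isFixedPt_tendsto_iterate {α : Type*}
    [ConditionallyCompleteLinearOrder α] [TopologicalSpace α] [OrderTopology α]
    {f : α → α} {a b x : α}
    (hmono : MonotoneOn f (Icc a b)) (hmaps : MapsTo f (Icc a b) (Icc a b))
    (hcont : ContinuousOn f (Icc a b)) (hx : x ∈ Icc a b) :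
    ∃ y, IsFixedPt f y ∧ Tendsto (fun k => f^[k] x) atTop (𝓝 y) := by
  have : Fact (a ≤ b) := ⟨hx.1.trans hx.2⟩
  set g := hmaps.restrict f (Icc a b) (Icc a b)
  have hg : Monotone g := fun p q hpq => hmono p.2 q.2 hpq
  obtain ⟨y, hy⟩ : ∃ y, Tendsto (fun k => g^[k] ⟨x, hx⟩) atTop (𝓝 y) := by
    rcases le_total (⟨x, hx⟩ : Icc a b) (g ⟨x, hx⟩) with hle | hge
    · exact ⟨_, tendsto_atTop_iSup (hg.monotone_iterate_of_le_map hle)⟩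
    · exact ⟨_, tendsto_atTop_iInf (hg.antitone_iterate_of_map_le hge)⟩
  refine ⟨y, congrArg Subtype.val
    (isFixedPt_of_tendsto_iterate hy (hcont.mapsToRestrict hmaps).continuousAt), ?_⟩
  simpa only [g, hmaps.coe_iterate_restrict] using tendsto_subtype_rng.1 hy

theorem ae_pi_forall {ι α : Type*} [Fintype ι] [MeasurableSpace α] {μ : Measure α}
    [SigmaFinite μ] {p : α → Prop} (h : ∀ᵐ x ∂μ, p x) :
    ∀ᵐ v ∂(Measure.pi fun _ : ι => μ), ∀ i, p (v i) :=
  eventually_all.2 fun _ => Measure.tendsto_eval_ae_ae.eventually h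

section Kernel

variable {n m : ℕ} {δ : ℝ} {μ : Measure ℝ} [SigmaFinite μ]

theorem ktw_zero (hμ : ∀ᵐ x ∂μ, 0 ≤ x) : ktw n m δ μ 0 = 0 := by
  refine integral_eq_zero_of_ae ?_
  filter_upwards [ae_pi_forall hμ] with v hv
  split_ifs
  · simp [hv]
  · simp

theorem ktw_eq_zero_of_lt (hm : m ≠ 0) {abar q : ℝ} (hμ : ∀ᵐ x ∂μ, x ≤ abar)
    (hq : abar < q) : ktw n m δ μ q = 0 := by
  refine integral_eq_zero_of_ae ?_
  filter_upwards [ae_pi_forall hμ] with v hv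
  have hnone : Finset.univ.filter (fun i => q ≤ v i) = ∅ :=
    Finset.filter_eq_empty_iff.2 fun i _ => ((hv i).trans_lt hq).not_ge
  simp [demandCount, hnone, hm]

end Kernel

def priceUpdate (α : ℝ) (K : ℝ → ℝ) (q : ℝ) : ℝ :=
  α * K q + (1 - α) * q

section PriceUpdate

variable {K : ℝ → ℝ} {L α : ℝ} {s : Set ℝ}

theorem priceUpdate_continuousOn (hK : ∀ x ∈ s, ∀ y ∈ s, |K x - K y| ≤ L * |x - y|) :
    ContinuousOn (priceUpdate α K) s :=
  (continuousOn_const.mul (LipschitzOnWith.of_dist_le' hK).continuousOn).add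
    (continuousOn_const.mul continuousOn_id)

theorem priceUpdate_monotoneOn (hK : ∀ x ∈ s, ∀ y ∈ s, |K x - K y| ≤ L * |x - y|)
    (hα0 : 0 ≤ α) (hα : α * (L + 1) ≤ 1) : MonotoneOn (priceUpdate α K) s := by
  intro x hx y hy hxy
  have hdrop : K x - K y ≤ L * (y - x) := by
    simpa [abs_of_nonpos (sub_nonpos.2 hxy)] using (abs_le.1 (hK x hx y hy)).2
  unfold priceUpdate
  nlinarith [mul_le_mul_of_nonneg_left hdrop hα0, mul_nonneg (sub_nonneg.2 hα) (sub_nonneg.2 hxy)]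

theorem priceUpdate_mapsTo_Icc {M : ℝ} (hK0 : K 0 = 0) (hKM : K M = 0)
    (hmono : MonotoneOn (priceUpdate α K) (Icc 0 M)) (hα : 0 ≤ α) :
    MapsTo (priceUpdate α K) (Icc 0 M) (Icc 0 M) := by
  intro x hx
  have hM : 0 ≤ M := hx.1.trans hx.2
  have hlow := hmono (left_mem_Icc.2 hM) hx hx.1
  have hup := hmono hx (right_mem_Icc.2 hM) hx.2
  simp only [priceUpdate, hK0, hKM] at hlow hup ⊢
  constructor <;> nlinarith

theorem isFixedPt_priceUpdate_iff (hα : α ≠ 0) {q : ℝ} :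
    IsFixedPt (priceUpdate α K) q ↔ K q = q := by
  simp only [IsFixedPt, priceUpdate]
  constructor <;> intro h
  · exact mul_left_cancel₀ hα (by linarith)
  · rw [h]; ring

end PriceUpdate

theorem twdpp_stable_general
    (n m : ℕ) (hm : 1 ≤ m) (μ : Measure ℝ) [IsProbabilityMeasure μ]
    (abar : ℝ)
    (hbdd : ∀ᵐ x ∂μ, x ∈ Set.Icc 0 abar)
    (δ : ℝ)
    (L : ℝ)
    (hlip : ∀ x ∈ Set.Ici (0 : ℝ), ∀ y ∈ Set.Ici (0 : ℝ),
      |ktw n m δ μ x - ktw n m δ μ y| ≤ L * |x - y|)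
    (α : ℝ) (hα0 : 0 < α) (hα1 : α ≤ 1 / (L + 1))
    (E : ℝ → ℝ) (hE : ∀ q, E q = α * ktw n m δ μ q + (1 - α) * q) :
    ∀ q₀, 0 < q₀ → ∃ qs, ktw n m δ μ qs = qs ∧
      Tendsto (fun k => E^[k] q₀) atTop (nhds qs) := by
  intro q₀ hq₀
  obtain rfl : E = priceUpdate α (ktw n m δ μ) := funext hE
  set E := priceUpdate α (ktw n m δ μ)
  have hL : 0 < L + 1 := by
    by_contra! h
    linarith [div_nonpos_of_nonneg_of_nonpos zero_le_one h]
  have hαL : α * (L + 1) ≤ 1 := (le_div_iff₀ hL).1 hα1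
  set M := max q₀ (abar + 1)
  have hmono : MonotoneOn E (Icc 0 M) :=
    (priceUpdate_monotoneOn hlip hα0.le hαL).mono Icc_subset_Ici_self
  have hmaps : MapsTo E (Icc 0 M) (Icc 0 M) :=
    priceUpdate_mapsTo_Icc (ktw_zero (hbdd.mono fun _ hx => hx.1))
      (ktw_eq_zero_of_lt (by omega) (hbdd.mono fun _ hx => hx.2)
        ((lt_add_one abar).trans_le (le_max_right _ _)))
      hmono hα0.le
  obtain ⟨qs, hfix, hlim⟩ := hmono.exists_isFixedPt_tendsto_iterate hmaps
    ((priceUpdate_continuousOn hlip).mono Icc_subset_Ici_self) ⟨hq₀.le, le_max_left _ _⟩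
  exact ⟨qs, (isFixedPt_priceUpdate_iff hα0.ne').1 hfix, hlim⟩

/-- Theorem (TWDPP stability): if bidder values are bounded by `abar` and the
truncated welfare kernel is `L`-Lipschitz and strictly concave on `[0, abar]`, then
for any `0 < α ≤ 1/(L+1)` the iterates of the expected price update
`E(q) = α·ktw(q) + (1-α)·q` from any positive start converge to a fixed point of the
kernel. -/
theorem twdpp_stable
    (n m : ℕ) (hm : 1 ≤ m) (μ : Measure ℝ) [IsProbabilityMeasure μ]
    (abar : ℝ) (habar : 0 < abar)
    (hbdd : ∀ᵐ x ∂μ, x ∈ Set.Icc 0 abar)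
    (δ : ℝ) (hδ : 0 < δ)
    (L : ℝ) (hL : 0 ≤ L)
    (hlip : ∀ x ∈ Set.Ici (0 : ℝ), ∀ y ∈ Set.Ici (0 : ℝ),
      |ktw n m δ μ x - ktw n m δ μ y| ≤ L * |x - y|)
    (hconc : StrictConcaveOn ℝ (Set.Icc 0 abar) (ktw n m δ μ))
    (α : ℝ) (hα0 : 0 < α) (hα1 : α ≤ 1 / (L + 1))
    (E : ℝ → ℝ) (hE : ∀ q, E q = α * ktw n m δ μ q + (1 - α) * q) :
    ∀ q₀, 0 < q₀ → ∃ qs, ktw n m δ μ qs = qs ∧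
      Tendsto (fun k => E^[k] q₀) atTop (nhds qs) :=
  twdpp_stable_general n m hm μ abar hbdd δ L hlip α hα0 hα1 E hE
end
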